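/- In the polynomial ring R = ℂ[c₁, c₂, c₂', c₃], the four polynomials d₁ = c₁, d₃ = c₁·c₂ − c₃, d₄ = c₂² + c₂'² + c₂·c₂' − c₁²·(c₂ + c₂'), and d₆ = c₂·c₂'·(c₂ + c₂' − c₁²) are algebraically independent over ℂ. -/

import Mathlib

/-!
Every `cᵢ` is integral over `ℂ[d₁, d₃, d₄, d₆]`: `c₁ = d₁`, the three elements `c₂`, `c₂'` and
`c₁² − c₂ − c₂'` (the `S₃`-orbit of `c₂`) are the roots of `T³ − d₁²T² − d₄T + d₆`, and
`c₃ = c₁c₂ − d₃`. Hence `ℂ[c₁, c₂, c₂', c₃]`, of transcendence degree `4`, is algebraic over the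
subalgebra generated by the four `dᵢ`, which are therefore a transcendence basis.
-/

open MvPolynomial

/-- `d₁ = c₁` in `ℂ[c₁, c₂, c₂', c₃]` (variables `X 0 = c₁`, `X 1 = c₂`, `X 2 = c₂'`,
`X 3 = c₃`). -/
noncomputable def d₁ : MvPolynomial (Fin 4) ℂ := X 0

/-- `d₃ = c₁c₂ − c₃`. -/
noncomputable def d₃ : MvPolynomial (Fin 4) ℂ := X 0 * X 1 - X 3

/-- `d₄ = c₂² + c₂'² + c₂c₂' − c₁²(c₂ + c₂')`. -/
noncomputable def d₄ : MvPolynomial (Fin 4) ℂ :=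
  X 1 ^ 2 + X 2 ^ 2 + X 1 * X 2 - X 0 ^ 2 * (X 1 + X 2)

/-- `d₆ = c₂c₂'(c₂ + c₂' − c₁²)`. -/
noncomputable def d₆ : MvPolynomial (Fin 4) ℂ :=
  X 1 * X 2 * (X 1 + X 2 - X 0 ^ 2)

theorem Algebra.IsIntegral.of_adjoin_eq_top {R B A : Type*} [CommSemiring R] [CommRing B]
    [CommRing A] [Algebra R B] [Algebra R A] [Algebra B A] [IsScalarTower R B A] {s : Set A}
    (hs : Algebra.adjoin R s = ⊤) (h : ∀ x ∈ s, IsIntegral B x) : Algebra.IsIntegral B A := by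
  have : (⊤ : Subalgebra R A) ≤ (integralClosure B A).restrictScalars R :=
    hs ▸ Algebra.adjoin_le h
  exact ⟨fun x => this trivial⟩

theorem IsIntegral.of_cubic_eq_zero {R A : Type*} [CommRing R] [Ring A] [Algebra R A] {x : A}
    (a b c : R)
    (h : x ^ 3 + algebraMap R A a * x ^ 2 + algebraMap R A b * x + algebraMap R A c = 0) :
    IsIntegral R x := by
  refine ⟨Polynomial.X ^ 3 + Polynomial.C a * Polynomial.X ^ 2 + Polynomial.C b * Polynomial.X +
    Polynomial.C c, by monicity!, ?_⟩
  simpa [Polynomial.eval₂_add] using h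

local notation "𝒟" => Algebra.adjoin ℂ (Set.range ![d₁, d₃, d₄, d₆])

lemma d_mem_adjoin (j : Fin 4) : ![d₁, d₃, d₄, d₆] j ∈ 𝒟 := Algebra.subset_adjoin ⟨j, rfl⟩

lemma isIntegral_d (j : Fin 4) : IsIntegral 𝒟 (![d₁, d₃, d₄, d₆] j) :=
  isIntegral_algebraMap (x := (⟨_, d_mem_adjoin j⟩ : 𝒟))

lemma X_cubic_eq_zero {i : Fin 4} (hi : i = 1 ∨ i = 2) :
    (X i : MvPolynomial (Fin 4) ℂ) ^ 3 - d₁ ^ 2 * X i ^ 2 - d₄ * X i + d₆ = 0 := by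
  rcases hi with rfl | rfl <;> simp only [d₁, d₄, d₆] <;> ring

lemma isIntegral_X_of_cubic {i : Fin 4} (hi : i = 1 ∨ i = 2) :
    IsIntegral 𝒟 (X i : MvPolynomial (Fin 4) ℂ) := by
  refine .of_cubic_eq_zero (-⟨d₁, d_mem_adjoin 0⟩ ^ 2) (-⟨d₄, d_mem_adjoin 2⟩)
    ⟨d₆, d_mem_adjoin 3⟩ ?_
  simpa [sub_eq_add_neg] using X_cubic_eq_zero hi

lemma isIntegral_X (i : Fin 4) : IsIntegral 𝒟 (X i : MvPolynomial (Fin 4) ℂ) := by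
  have hX₀ : IsIntegral 𝒟 (X 0 : MvPolynomial (Fin 4) ℂ) := isIntegral_d 0
  have hX₁ : IsIntegral 𝒟 (X 1 : MvPolynomial (Fin 4) ℂ) := isIntegral_X_of_cubic (by simp)
  fin_cases i
  · exact hX₀
  · exact hX₁
  · exact isIntegral_X_of_cubic (by simp)
  · have hX₃ : (X 3 : MvPolynomial (Fin 4) ℂ) = X 0 * X 1 - d₃ := by simp [d₃]
    exact hX₃ ▸ (hX₀.mul hX₁).sub (isIntegral_d 1)

instance isIntegral_adjoin_d : Algebra.IsIntegral 𝒟 (MvPolynomial (Fin 4) ℂ) :=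
  .of_adjoin_eq_top (R := ℂ) adjoin_range_X fun _ ⟨i, hi⟩ => hi ▸ isIntegral_X i

/-- The polynomials `d₁, d₃, d₄, d₆` are algebraically independent over ℂ. -/
theorem stmt_7 :
    AlgebraicIndependent ℂ (![d₁, d₃, d₄, d₆] : Fin 4 → MvPolynomial (Fin 4) ℂ) :=
  (Algebra.IsAlgebraic.isTranscendenceBasis_of_le_trdeg_of_finite ℂ _
    (by simp [MvPolynomial.trdeg_of_isDomain])).1
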